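/- arXiv:2408.11362 — 8 statements merged into one kernel-verified Lean document; each statement's English description precedes it below -/
import Mathlib

section
/- Suppose φ1 = φ2 = β ∈ (0,1) (symmetric sender population). Then Δ_O^B + Δ_S^B/2 = (p_H^B - q_H) + (p_2^B - q_2) ≥ 0 and Δ_O^B - Δ_S^B/2 = (p_H^B - q_H) + (p_1^B - q_1) ≥ 0; hence |Δ_S^B| ≤ 2Δ_O^B and all receiver types accept the recommendation. -/
/-!
After a buy recommendation the posterior of `H` together with either middle type `j` exceeds its
prior: writing `D = qH + β (q₁ + q₂)`, the numerator of `(p_H - q_H) + (p_j - q_j)` over `D` is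
`q_H (1 - β) q_k + q_H q_L + β q_j q_L` (`k` the other middle type), a sum of nonnegative terms.
Adding the two inequalities bounds `|Δ_S|` by `2 Δ_O`, which is exactly acceptance by every
receiver type `i ∈ [-1/2, 1/2]`.
-/

lemma posterior_gain_nonneg {qH qj qk qL β D : ℝ} (hqH : 0 ≤ qH) (hqj : 0 ≤ qj) (hqk : 0 ≤ qk)
    (hqL : 0 ≤ qL) (hsum : qH + qj + qk + qL = 1) (hβ0 : 0 ≤ β) (hβ1 : β ≤ 1)
    (hD_def : D = qH + β * (qj + qk)) (hD : 0 < D) :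
    0 ≤ (qH / D - qH) + (β * qj / D - qj) := by
  have key : (qH / D - qH) + (β * qj / D - qj) = (qH * (1 - β) * qk + qH * qL + β * qj * qL) / D := by
    field_simp
    subst hD_def
    linear_combination (-(qH + β * qj)) * hsum
  rw [key]
  have : 0 ≤ 1 - β := sub_nonneg.2 hβ1
  positivity

lemma abs_sub_le_of_add_nonneg {a b c : ℝ} (hb : 0 ≤ a + b) (hc : 0 ≤ a + c) :
    |c - b| ≤ 2 * (a + b / 2 + c / 2) := by
  rw [abs_le]
  constructor <;> linarith

lemma mul_le_of_abs_le_two_mul {s o i : ℝ} (hs : |s| ≤ 2 * o) (hi : i ∈ Set.Icc (-(1:ℝ)/2) (1/2)) :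
    i * s ≤ o := by
  have hi' : |i| ≤ 1 / 2 := abs_le.2 ⟨by linarith [hi.1], hi.2⟩
  calc i * s ≤ |i| * |s| := (le_abs_self _).trans (abs_mul i s).le
    _ ≤ 1 / 2 * (2 * o) := mul_le_mul hi' hs (abs_nonneg s) (by norm_num)
    _ = o := by ring

/-- Symmetric sender population: Δ_O^B ± Δ_S^B/2 ≥ 0, hence |Δ_S^B| ≤ 2Δ_O^B
and all receiver types accept the recommendation. -/
theorem stmt_8 (qH q1 q2 qL β : ℝ)
    (hqH : 0 ≤ qH) (hq1 : 0 ≤ q1) (hq2 : 0 ≤ q2) (hqL : 0 ≤ qL)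
    (hsum : qH + q1 + q2 + qL = 1)
    (hβ : β ∈ Set.Ioo (0:ℝ) 1)
    (hD : 0 < qH + β * (q1 + q2)) :
    let D := qH + β * (q1 + q2)
    let pH := qH / D
    let p1 := β * q1 / D
    let p2 := β * q2 / D
    let ΔO := (pH - qH) + (p1 - q1)/2 + (p2 - q2)/2
    let ΔS := (p2 - q2) - (p1 - q1)
    0 ≤ (pH - qH) + (p2 - q2) ∧ 0 ≤ (pH - qH) + (p1 - q1) ∧
    |ΔS| ≤ 2 * ΔO ∧
    ∀ i ∈ Set.Icc (-(1:ℝ)/2) (1/2), i * ΔS ≤ ΔO := by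
  intro D pH p1 p2 ΔO ΔS
  obtain ⟨hβ0, hβ1⟩ := hβ
  have h2 : 0 ≤ (pH - qH) + (p2 - q2) :=
    posterior_gain_nonneg hqH hq2 hq1 hqL (by linarith) hβ0.le hβ1.le (by ring) hD
  have h1 : 0 ≤ (pH - qH) + (p1 - q1) :=
    posterior_gain_nonneg hqH hq1 hq2 hqL hsum hβ0.le hβ1.le rfl hD
  have habs : |ΔS| ≤ 2 * ΔO := abs_sub_le_of_add_nonneg h1 h2
  exact ⟨h2, h1, habs, fun i hi => mul_le_of_abs_le_two_mul habs hi⟩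
end

section
/- Under the symmetric parameterization, the value of the recommendation system satisfies V(β) = π^B · Δ_O^B = (1-2Q)·(σ + Q(β - σ + σ²(1-β)))/(σ+1)², where π^B = (1-2Q)σ/(1+σ) + 2Qβ and Δ_O^B = (βQ(σ+1) - 2Qσ + σ)/(2βQ(σ+1) - 2Qσ + σ) - (1-2Q)σ/(1+σ) - Q. -/
/-
The denominator of the posterior in Δ_O^B is exactly (1 + σ) · π^B, so multiplying by π^B cancels
it and V(β) becomes a polynomial in Q, σ, β over (1 + σ)².
-/

lemma posterior_denom_eq {Q σ β : ℝ} (hσ : 1 + σ ≠ 0) :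
    2*β*Q*(σ+1) - 2*Q*σ + σ = (1 + σ) * ((1 - 2*Q) * σ / (1 + σ) + 2*Q*β) := by
  field_simp
  ring

lemma recommend_prob_pos {Q σ β : ℝ} (hQ : Q ∈ Set.Ioo (0:ℝ) (1/2)) (hσ : 0 < σ) (hβ : 0 < β) :
    0 < (1 - 2*Q) * σ / (1 + σ) + 2*Q*β := by
  obtain ⟨hQ0, hQ1⟩ := hQ
  have : 0 < 1 - 2*Q := by linarith
  positivity

/-- Value of the recommendation system under the symmetric parameterization:
V(β) = π^B · Δ_O^B = (1-2Q)(σ + Q(β - σ + σ²(1-β)))/(σ+1)². -/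
theorem stmt_9 (Q σ β : ℝ)
    (hQ : Q ∈ Set.Ioo (0:ℝ) (1/2)) (hσ : 0 < σ) (hβ : β ∈ Set.Ioo (0:ℝ) 1) :
    ((1 - 2*Q) * σ / (1 + σ) + 2*Q*β) *
      ((β*Q*(σ+1) - 2*Q*σ + σ) / (2*β*Q*(σ+1) - 2*Q*σ + σ)
        - (1 - 2*Q) * σ / (1 + σ) - Q)
    = (1 - 2*Q) * (σ + Q*(β - σ + σ^2*(1 - β))) / (σ + 1)^2 := by
  have hσ1 : 1 + σ ≠ 0 := by linarith
  have hπ := (recommend_prob_pos hQ hσ hβ.1).ne'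
  rw [posterior_denom_eq hσ1]
  set π := (1 - 2*Q) * σ / (1 + σ) + 2*Q*β with hπ_def
  have hcancel : π * ((β*Q*(σ+1) - 2*Q*σ + σ) / ((1 + σ) * π))
      = (β*Q*(σ+1) - 2*Q*σ + σ) / (1 + σ) := by
    field_simp
  rw [mul_sub, mul_sub, hcancel, hπ_def]
  field_simp
  ring
end

section
/- Under the symmetric parameterization, π^B = (1-2Q)σ/(1+σ) + 2Qβ is strictly increasing in β, and Δ_O^B = (βQ(σ+1) - 2Qσ + σ)/(2βQ(σ+1) - 2Qσ + σ) - (1-2Q)σ/(1+σ) - Q is strictly decreasing in β, with dΔ_O^B/dβ = -Q(1-2Q)σ(1+σ)/(σ - 2Qσ + 2βQ(1+σ))². -/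
/-! Δ_O^B is a Möbius function of β plus a constant, so its derivative is the determinant
`a d - b c` of its coefficients over the squared denominator; here the determinant is
`-Q (1 - 2Q) σ (1 + σ) < 0`, while the denominator `σ (1 - 2Q) + 2βQ(1 + σ)` is positive. -/

theorem hasDerivAt_affine_div_affine {a b c d x : ℝ} (h : c * x + d ≠ 0) :
    HasDerivAt (fun x => (a * x + b) / (c * x + d)) ((a * d - b * c) / (c * x + d) ^ 2) x := by
  have hnum : HasDerivAt (fun x => a * x + b) a x := by
    simpa using ((hasDerivAt_id x).const_mul a).add_const b
  have hden : HasDerivAt (fun x => c * x + d) c x := by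
    simpa using ((hasDerivAt_id x).const_mul c).add_const d
  exact (hnum.div hden h).congr_deriv (by ring)

section Symmetric

variable {Q σ β : ℝ}

theorem buy_denominator_pos (hQ : Q ∈ Set.Ioo (0:ℝ) (1/2)) (hσ : 0 < σ) (hβ : 0 < β) :
    0 < σ - 2*Q*σ + 2*β*Q*(1 + σ) := by
  have : 0 < σ * (1 - 2*Q) := mul_pos hσ (by linarith [hQ.2])
  have : 0 < 2*β*Q*(1 + σ) := by have := hQ.1; positivity
  linarith

theorem hasDerivAt_objective_buy_effect (hQ : Q ∈ Set.Ioo (0:ℝ) (1/2)) (hσ : 0 < σ)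
    (hβ : 0 < β) :
    HasDerivAt (fun β : ℝ => (β*Q*(σ+1) - 2*Q*σ + σ) / (2*β*Q*(σ+1) - 2*Q*σ + σ)
        - (1 - 2*Q) * σ / (1 + σ) - Q)
      (-(Q * (1 - 2*Q) * σ * (1 + σ)) / (σ - 2*Q*σ + 2*β*Q*(1 + σ))^2) β := by
  have hden : 2*Q*(σ+1)*β + (σ - 2*Q*σ) = σ - 2*Q*σ + 2*β*Q*(1 + σ) := by ring
  have hmobius := hasDerivAt_affine_div_affine (a := Q*(σ+1)) (b := σ - 2*Q*σ)
    (c := 2*Q*(σ+1)) (d := σ - 2*Q*σ) (x := β)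
    (by rw [hden]; exact (buy_denominator_pos hQ hσ hβ).ne')
  have hfun : (fun β : ℝ => (β*Q*(σ+1) - 2*Q*σ + σ) / (2*β*Q*(σ+1) - 2*Q*σ + σ)) =
      fun x => (Q*(σ+1) * x + (σ - 2*Q*σ)) / (2*Q*(σ+1) * x + (σ - 2*Q*σ)) := by
    funext x
    ring
  rw [hden, ← hfun] at hmobius
  exact ((hmobius.sub_const _).sub_const Q).congr_deriv (by ring)

theorem objective_buy_effect_deriv_neg (hQ : Q ∈ Set.Ioo (0:ℝ) (1/2)) (hσ : 0 < σ)
    (hβ : 0 < β) :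
    -(Q * (1 - 2*Q) * σ * (1 + σ)) / (σ - 2*Q*σ + 2*β*Q*(1 + σ))^2 < 0 := by
  have hdet : 0 < Q * (1 - 2*Q) * σ * (1 + σ) := by
    have := mul_pos hQ.1 (by linarith [hQ.2] : (0:ℝ) < 1 - 2*Q)
    positivity
  have := buy_denominator_pos hQ hσ hβ
  exact div_neg_of_neg_of_pos (neg_neg_of_pos hdet) (by positivity)

end Symmetric

/-- π^B is strictly increasing and Δ_O^B strictly decreasing in β, with the
stated derivative of Δ_O^B. -/
theorem stmt_10 (Q σ : ℝ) (hQ : Q ∈ Set.Ioo (0:ℝ) (1/2)) (hσ : 0 < σ) :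
    StrictMonoOn (fun β : ℝ => (1 - 2*Q) * σ / (1 + σ) + 2*Q*β) (Set.Ioo (0:ℝ) 1) ∧
    StrictAntiOn (fun β : ℝ => (β*Q*(σ+1) - 2*Q*σ + σ) / (2*β*Q*(σ+1) - 2*Q*σ + σ)
        - (1 - 2*Q) * σ / (1 + σ) - Q) (Set.Ioo (0:ℝ) 1) ∧
    ∀ β ∈ Set.Ioo (0:ℝ) 1,
      HasDerivAt (fun β : ℝ => (β*Q*(σ+1) - 2*Q*σ + σ) / (2*β*Q*(σ+1) - 2*Q*σ + σ)
          - (1 - 2*Q) * σ / (1 + σ) - Q)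
        (-(Q * (1 - 2*Q) * σ * (1 + σ)) / (σ - 2*Q*σ + 2*β*Q*(1 + σ))^2) β := by
  have hderiv := fun β (hβ : β ∈ Set.Ioo (0:ℝ) 1) => hasDerivAt_objective_buy_effect hQ hσ hβ.1
  refine ⟨?_, ?_, hderiv⟩
  · exact ((strictMono_mul_left_of_pos (by linarith [hQ.1])).const_add _).strictMonoOn _
  · exact strictAntiOn_of_hasDerivWithinAt_neg (convex_Ioo 0 1)
      (fun β hβ => (hderiv β hβ).continuousAt.continuousWithinAt)
      (fun β hβ => (hderiv β (interior_subset hβ)).hasDerivWithinAt)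
      (fun β hβ => objective_buy_effect_deriv_neg hQ hσ (interior_subset hβ).1)
end

section
/- Fix β ∈ [0,1] and σ > 0, and view V(Q) = (1-2Q)·(σ + Q(β - σ + σ²(1-β)))/(σ+1)² as a function of Q ∈ (0, 1/2). If 3σ - β - σ² + σ²β > 0 then V is strictly decreasing in Q on (0,1/2); in particular this holds when σ = 1. If 3σ - β - σ² + σ²β < 0 then Q* = (3σ - β - σ² + σ²β)/(4σ - 4β - 4σ² + 4σ²β) lies in (0, 1/2) and maximizes V over (0,1/2). -/
/-!
Writing `c = β - σ + σ²(1 - β)`, the numerator of `V` is the quadratic `(1 - 2Q)(σ + Qc)`, and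
`3σ - β - σ² + σ²β = 2σ - c`, `4σ - 4β - 4σ² + 4σ²β = -4c`. For `x < y` the difference of the
quadratic at `x` and `y` is `(y - x)` times the convex combination
`(2σ - c)(1 - (x + y)) + (2σ + c)(x + y)`, and `2σ + c = β + σ + σ²(1 - β) > 0` always.
So `2σ - c > 0` makes `V` strictly decreasing, while `2σ - c < 0` forces `c > 0`: the quadratic is
then concave with vertex `Q* = (c - 2σ)/(4c)`, which lies in `(0, 1/2)`.
-/

open Set

section Quadratic

variable {a c : ℝ}

lemma one_sub_two_mul_mul_sub (a c x y : ℝ) :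
    (1 - 2*x) * (a + x*c) - (1 - 2*y) * (a + y*c)
      = (y - x) * ((2*a - c) * (1 - (x + y)) + (2*a + c) * (x + y)) := by
  ring

lemma strictAntiOn_one_sub_two_mul_mul (h₁ : 0 < 2*a - c) (h₂ : 0 < 2*a + c) :
    StrictAntiOn (fun Q : ℝ => (1 - 2*Q) * (a + Q*c)) (Ioo 0 (1/2)) := by
  rintro x ⟨hx₀, hx₁⟩ y ⟨hy₀, hy₁⟩ hxy
  have hpos : 0 < (2*a - c) * (1 - (x + y)) + (2*a + c) * (x + y) := by
    have : 0 < 1 - (x + y) := by linarith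
    positivity
  show (1 - 2*y) * (a + y*c) < (1 - 2*x) * (a + x*c)
  linarith [one_sub_two_mul_mul_sub a c x y, mul_pos (sub_pos.2 hxy) hpos]

lemma one_sub_two_mul_mul_le_vertex (hc : 0 < c) (x : ℝ) :
    (1 - 2*x) * (a + x*c)
      ≤ (1 - 2*((c - 2*a) / (4*c))) * (a + (c - 2*a) / (4*c) * c) := by
  have hsq : (1 - 2*((c - 2*a) / (4*c))) * (a + (c - 2*a) / (4*c) * c) - (1 - 2*x) * (a + x*c)
      = 2*c * (x - (c - 2*a) / (4*c))^2 := by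
    field_simp
    ring
  linarith [mul_nonneg (by linarith : (0:ℝ) ≤ 2*c) (sq_nonneg (x - (c - 2*a) / (4*c)))]

lemma vertex_mem_Ioo (h₁ : 2*a - c < 0) (h₂ : 0 < 2*a + c) :
    (c - 2*a) / (4*c) ∈ Ioo 0 (1/2) := by
  have hc : 0 < 4*c := by linarith
  exact ⟨div_pos (by linarith) hc, by rw [div_lt_iff₀ hc]; linarith⟩

end Quadratic

/-- Effect of the prevalence Q of controversial products on the value V(Q). -/
theorem stmt_12 (β σ : ℝ) (hβ : β ∈ Set.Icc (0:ℝ) 1) (hσ : 0 < σ) :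
    let V := fun Q : ℝ => (1 - 2*Q) * (σ + Q*(β - σ + σ^2*(1 - β))) / (σ + 1)^2
    (σ = 1 → 0 < 3*σ - β - σ^2 + σ^2*β) ∧
    (0 < 3*σ - β - σ^2 + σ^2*β → StrictAntiOn V (Set.Ioo (0:ℝ) (1/2))) ∧
    (3*σ - β - σ^2 + σ^2*β < 0 →
      (3*σ - β - σ^2 + σ^2*β) / (4*σ - 4*β - 4*σ^2 + 4*σ^2*β) ∈ Set.Ioo (0:ℝ) (1/2) ∧
      ∀ Q ∈ Set.Ioo (0:ℝ) (1/2),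
        V Q ≤ V ((3*σ - β - σ^2 + σ^2*β) / (4*σ - 4*β - 4*σ^2 + 4*σ^2*β))) := by
  intro V
  obtain ⟨hβ₀, hβ₁⟩ := hβ
  have hsum : 0 < 2*σ + (β - σ + σ^2*(1 - β)) := by
    have : 0 ≤ σ^2 * (1 - β) := mul_nonneg (sq_nonneg σ) (by linarith)
    linarith
  have hdiff : 3*σ - β - σ^2 + σ^2*β = 2*σ - (β - σ + σ^2*(1 - β)) := by ring
  have hvertex : (3*σ - β - σ^2 + σ^2*β) / (4*σ - 4*β - 4*σ^2 + 4*σ^2*β)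
      = ((β - σ + σ^2*(1 - β)) - 2*σ) / (4*(β - σ + σ^2*(1 - β))) := by
    rw [hdiff, show 4*σ - 4*β - 4*σ^2 + 4*σ^2*β = -(4*(β - σ + σ^2*(1 - β))) by ring,
      div_neg, ← neg_div, neg_sub]
  have hden : (0:ℝ) < (σ + 1)^2 := by positivity
  refine ⟨by rintro rfl; linarith, fun h => ?_, fun h => ?_⟩
  · rw [hdiff] at h
    exact fun x hx y hy hxy =>
      div_lt_div_of_pos_right (strictAntiOn_one_sub_two_mul_mul h hsum hx hy hxy) hden
  · rw [hdiff] at h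
    rw [hvertex]
    exact ⟨vertex_mem_Ioo h hsum, fun Q _ =>
      div_le_div_of_nonneg_right (one_sub_two_mul_mul_le_vertex (by linarith) Q) hden.le⟩
end

section
/- Under Assumption q_1 = q_2 = Q, q_H > 0, and type distribution F(i) = (i+1/2)^a with a > 0, the subjective effect of a buy recommendation with threshold R ∈ (0,1) equals Δ_S^B = -Q(1 - R^a - (1-R)^a)/(q_H + Q(1 - R^a + (1-R)^a)), and Δ_S^B = 0 if a = 1, Δ_S^B < 0 if a > 1, and Δ_S^B > 0 if a < 1. -/
/-! With `q₁ = q₂ = Q` the prior terms cancel, so `Δ_S^B = Q (φ₂ - φ₁) / D`, where the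
denominator `D = q_H + Q (φ₁ + φ₂)` is positive. Since `R + (1 - R) = 1`, the sign of
`φ₂ - φ₁ = R^a + (1 - R)^a - 1` is decided by comparing `x^a` with `x` on `(0, 1)`:
the power is smaller for `a > 1` and larger for `a < 1`. -/

namespace Real

variable {x y a : ℝ}

lemma rpow_add_rpow_lt_one (hx : 0 < x) (hy : 0 < y) (hxy : x + y = 1) (ha : 1 < a) :
    x ^ a + y ^ a < 1 := by
  have hx' : x ^ a < x := rpow_lt_self_of_lt_one hx (by linarith) ha
  have hy' : y ^ a < y := rpow_lt_self_of_lt_one hy (by linarith) ha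
  linarith

lemma one_lt_rpow_add_rpow (hx : 0 < x) (hy : 0 < y) (hxy : x + y = 1) (ha : a < 1) :
    1 < x ^ a + y ^ a := by
  have hx' : x < x ^ a := self_lt_rpow_of_lt_one hx (by linarith) ha
  have hy' : y < y ^ a := self_lt_rpow_of_lt_one hy (by linarith) ha
  linarith

end Real

lemma sub_sub_sub_div_eq {K : Type*} [Field K] (Q φ₁ φ₂ D : K) :
    (Q * φ₂ / D - Q) - (Q * φ₁ / D - Q) = -(Q * (φ₁ - φ₂)) / D := by
  ring

/-- Under F(i) = (i+1/2)^a and q1 = q2 = Q, the subjective effect of a buy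
recommendation with threshold R equals the stated formula, with the stated signs. -/
theorem stmt_13 (a R Q qH : ℝ)
    (ha : 0 < a) (hR : R ∈ Set.Ioo (0:ℝ) 1) (hQ : 0 < Q) (hqH : 0 < qH) :
    let φ1 := 1 - R ^ a
    let φ2 := (1 - R) ^ a
    let D := qH + Q * (φ1 + φ2)
    let p1 := Q * φ1 / D
    let p2 := Q * φ2 / D
    let ΔS := (p2 - Q) - (p1 - Q)
    ΔS = -(Q * (1 - R ^ a - (1 - R) ^ a)) / (qH + Q * (1 - R ^ a + (1 - R) ^ a)) ∧
    (a = 1 → ΔS = 0) ∧ (1 < a → ΔS < 0) ∧ (a < 1 → 0 < ΔS) := by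
  obtain ⟨hR0, hR1⟩ := hR
  have h1R : 0 < 1 - R := sub_pos.mpr hR1
  have hsum : R + (1 - R) = 1 := add_sub_cancel R 1
  have hD : 0 < qH + Q * (1 - R ^ a + (1 - R) ^ a) := by
    have hRa : R ^ a < 1 := Real.rpow_lt_one hR0.le hR1 ha
    have h1Ra : 0 < (1 - R) ^ a := Real.rpow_pos_of_pos h1R a
    have := mul_pos hQ (by linarith : 0 < 1 - R ^ a + (1 - R) ^ a)
    linarith
  have hΔ := sub_sub_sub_div_eq Q (1 - R ^ a) ((1 - R) ^ a) (qH + Q * (1 - R ^ a + (1 - R) ^ a))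
  refine ⟨hΔ, fun ha1 => ?_, fun ha1 => ?_, fun ha1 => ?_⟩ <;> rw [hΔ]
  · simp [ha1]
  · have := Real.rpow_add_rpow_lt_one hR0 h1R hsum ha1
    exact div_neg_of_neg_of_pos (neg_neg_of_pos (mul_pos hQ (by linarith))) hD
  · have := Real.one_lt_rpow_add_rpow hR0 h1R hsum ha1
    exact div_pos (neg_pos_of_neg (mul_neg_of_pos_of_neg hQ (by linarith))) hD
end

section
/- Let V(R) = c_0 + (Q/(a+1))·[c_1·(1 - R^a) + c_2·(1-R)^a] with a > 0, Q > 0, c_1 = a + (a+1)·(Q(σ-1) - σ)/(σ+1), c_2 = 1 + (a+1)·(Q(σ-1) - σ)/(σ+1), and σ > 0. Then V is quasiconcave on (0,1): its derivative V'(R) = -(Qa/(a+1))·[R^{a-1}·c_1 + (1-R)^{a-1}·c_2] satisfies: if V'(R_0) < 0 for some R_0 ∈ (0,1) then V'(R) < 0 for all R ∈ (R_0, 1) whenever c_1 and c_2 have opposite signs ordered consistently with a ≷ 1, and V is monotone when c_1, c_2 have the same sign. -/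
open Set

/-!
Writing `V' = -K · g` with `K = Q a / (a + 1) > 0` and `g R = R^(a-1) c₁ + (1-R)^(a-1) c₂`,
everything reduces to the shape of `g`. When `c₁` and `c₂` have opposite signs ordered
consistently with `a ≷ 1`, both summands of `g` are monotone, so once `g` is positive it stays
positive. When `c₁` and `c₂` have the same sign, so does `g`, and the mean value theorem gives
monotonicity of `V`.
-/

theorem hasDerivAt_mul_one_sub_rpow_add_mul_one_sub_rpow (a c₁ c₂ : ℝ) {R : ℝ}
    (hR₀ : R ≠ 0) (hR₁ : R ≠ 1) :
    HasDerivAt (fun R : ℝ => c₁ * (1 - R ^ a) + c₂ * (1 - R) ^ a)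
      (-a * (R ^ (a - 1) * c₁ + (1 - R) ^ (a - 1) * c₂)) R := by
  have hpow : HasDerivAt (fun R : ℝ => R ^ a) (a * R ^ (a - 1)) R :=
    Real.hasDerivAt_rpow_const (Or.inl hR₀)
  have hpow_sub : HasDerivAt (fun R : ℝ => (1 - R) ^ a) (a * (1 - R) ^ (a - 1) * -1) R :=
    (Real.hasDerivAt_rpow_const (Or.inl (sub_ne_zero.mpr hR₁.symm))).comp R
      ((hasDerivAt_id R).const_sub 1)
  exact (((hpow.const_sub 1).const_mul c₁).add (hpow_sub.const_mul c₂)).congr_deriv (by ring)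

theorem monotoneOn_rpow_mul_add_one_sub_rpow_mul_of_nonneg {p c₁ c₂ : ℝ} (hp : 0 ≤ p)
    (hc₁ : 0 ≤ c₁) (hc₂ : c₂ ≤ 0) :
    MonotoneOn (fun R : ℝ => R ^ p * c₁ + (1 - R) ^ p * c₂) (Ioo 0 1) := by
  intro x hx y hy hxy
  have h₁ : x ^ p ≤ y ^ p := Real.rpow_le_rpow hx.1.le hxy hp
  have h₂ : (1 - y) ^ p ≤ (1 - x) ^ p := Real.rpow_le_rpow (by linarith [hy.2]) (by linarith) hp
  dsimp only
  nlinarith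

theorem monotoneOn_rpow_mul_add_one_sub_rpow_mul_of_nonpos {p c₁ c₂ : ℝ} (hp : p ≤ 0)
    (hc₁ : c₁ ≤ 0) (hc₂ : 0 ≤ c₂) :
    MonotoneOn (fun R : ℝ => R ^ p * c₁ + (1 - R) ^ p * c₂) (Ioo 0 1) := by
  intro x hx y hy hxy
  have h₁ : y ^ p ≤ x ^ p := Real.rpow_le_rpow_of_nonpos hx.1 hxy hp
  have h₂ : (1 - x) ^ p ≤ (1 - y) ^ p :=
    Real.rpow_le_rpow_of_nonpos (by linarith [hy.2]) (by linarith) hp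
  dsimp only
  nlinarith

theorem monotoneOn_Ioo_of_hasDerivAt_nonneg {f f' : ℝ → ℝ} {a b : ℝ}
    (hf : ∀ x ∈ Ioo a b, HasDerivAt f (f' x) x) (hf' : ∀ x ∈ Ioo a b, 0 ≤ f' x) :
    MonotoneOn f (Ioo a b) :=
  monotoneOn_of_hasDerivWithinAt_nonneg (convex_Ioo a b)
    (fun x hx => (hf x hx).continuousAt.continuousWithinAt)
    (by simpa only [interior_Ioo] using fun x hx => (hf x hx).hasDerivWithinAt)
    (by simpa only [interior_Ioo] using hf')

theorem antitoneOn_Ioo_of_hasDerivAt_nonpos {f f' : ℝ → ℝ} {a b : ℝ}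
    (hf : ∀ x ∈ Ioo a b, HasDerivAt f (f' x) x) (hf' : ∀ x ∈ Ioo a b, f' x ≤ 0) :
    AntitoneOn f (Ioo a b) :=
  antitoneOn_of_hasDerivWithinAt_nonpos (convex_Ioo a b)
    (fun x hx => (hf x hx).continuousAt.continuousWithinAt)
    (by simpa only [interior_Ioo] using fun x hx => (hf x hx).hasDerivWithinAt)
    (by simpa only [interior_Ioo] using hf')

theorem stmt_15_general (a Q σ : ℝ) (ha : 0 < a) (hQ : 0 < Q) :
    let c0 := (1 - 2*Q) * σ * (Q*(σ - 1) + 1) / (σ + 1)^2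
    let c1 := a + (a + 1) * (Q*(σ - 1) - σ) / (σ + 1)
    let c2 := 1 + (a + 1) * (Q*(σ - 1) - σ) / (σ + 1)
    let V := fun R : ℝ => c0 + (Q / (a + 1)) * (c1 * (1 - R ^ a) + c2 * (1 - R) ^ a)
    let V' := fun R : ℝ => -(Q * a / (a + 1)) * (R ^ (a - 1) * c1 + (1 - R) ^ (a - 1) * c2)
    (∀ R ∈ Set.Ioo (0:ℝ) 1, HasDerivAt V (V' R) R) ∧
    (1 ≤ a → 0 < c1 → c2 < 0 →
      ∀ R0 ∈ Set.Ioo (0:ℝ) 1, V' R0 < 0 → ∀ R ∈ Set.Ioo R0 1, V' R < 0) ∧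
    (a ≤ 1 → c1 < 0 → 0 < c2 →
      ∀ R0 ∈ Set.Ioo (0:ℝ) 1, V' R0 < 0 → ∀ R ∈ Set.Ioo R0 1, V' R < 0) ∧
    (0 ≤ c1 → 0 ≤ c2 → AntitoneOn V (Set.Ioo (0:ℝ) 1)) ∧
    (c1 ≤ 0 → c2 ≤ 0 → MonotoneOn V (Set.Ioo (0:ℝ) 1)) := by
  intro c0 c1 c2 V V'
  set g := fun R : ℝ => R ^ (a - 1) * c1 + (1 - R) ^ (a - 1) * c2
  have hK : 0 < Q * a / (a + 1) := by positivity
  have hderiv : ∀ R ∈ Ioo (0:ℝ) 1, HasDerivAt V (V' R) R := fun R hR =>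
    (((hasDerivAt_mul_one_sub_rpow_add_mul_one_sub_rpow a c1 c2 hR.1.ne' hR.2.ne).const_mul
      (Q / (a + 1))).const_add c0).congr_deriv (by ring)
  have persist : MonotoneOn g (Ioo 0 1) →
      ∀ R0 ∈ Ioo (0:ℝ) 1, V' R0 < 0 → ∀ R ∈ Ioo R0 1, V' R < 0 := by
    intro hg R0 hR0 hV R hR
    have hg₀ : 0 < g R0 := pos_of_mul_neg_right hV (neg_nonpos.mpr hK.le)
    exact mul_neg_of_neg_of_pos (neg_neg_of_pos hK)
      (hg₀.trans_le (hg hR0 ⟨hR0.1.trans hR.1, hR.2⟩ hR.1.le))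
  refine ⟨hderiv, fun ha₁ hc₁ hc₂ => persist ?_, fun ha₁ hc₁ hc₂ => persist ?_,
    fun hc₁ hc₂ => antitoneOn_Ioo_of_hasDerivAt_nonpos hderiv fun R hR => ?_,
    fun hc₁ hc₂ => monotoneOn_Ioo_of_hasDerivAt_nonneg hderiv fun R hR => ?_⟩
  · exact monotoneOn_rpow_mul_add_one_sub_rpow_mul_of_nonneg (by linarith) hc₁.le hc₂.le
  · exact monotoneOn_rpow_mul_add_one_sub_rpow_mul_of_nonpos (by linarith) hc₁.le hc₂.le
  · have h₁ := Real.rpow_nonneg hR.1.le (a - 1)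
    have h₂ := Real.rpow_nonneg (sub_nonneg.mpr hR.2.le) (a - 1)
    exact mul_nonpos_of_nonpos_of_nonneg (neg_nonpos.mpr hK.le)
      (add_nonneg (mul_nonneg h₁ hc₁) (mul_nonneg h₂ hc₂))
  · have h₁ := Real.rpow_nonneg hR.1.le (a - 1)
    have h₂ := Real.rpow_nonneg (sub_nonneg.mpr hR.2.le) (a - 1)
    exact mul_nonneg_of_nonpos_of_nonpos (neg_nonpos.mpr hK.le)
      (add_nonpos (mul_nonpos_of_nonneg_of_nonpos h₁ hc₁) (mul_nonpos_of_nonneg_of_nonpos h₂ hc₂))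

/-- Quasiconcavity of V(R) = c0 + (Q/(a+1))(c1(1-R^a) + c2(1-R)^a): once the
derivative turns negative it stays negative in the sign-mixed cases, and V is
monotone when c1, c2 have the same sign. -/
theorem stmt_15 (a Q σ : ℝ) (ha : 0 < a) (hQ : 0 < Q) (hσ : 0 < σ) :
    let c0 := (1 - 2*Q) * σ * (Q*(σ - 1) + 1) / (σ + 1)^2
    let c1 := a + (a + 1) * (Q*(σ - 1) - σ) / (σ + 1)
    let c2 := 1 + (a + 1) * (Q*(σ - 1) - σ) / (σ + 1)
    let V := fun R : ℝ => c0 + (Q / (a + 1)) * (c1 * (1 - R ^ a) + c2 * (1 - R) ^ a)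
    let V' := fun R : ℝ => -(Q * a / (a + 1)) * (R ^ (a - 1) * c1 + (1 - R) ^ (a - 1) * c2)
    (∀ R ∈ Set.Ioo (0:ℝ) 1, HasDerivAt V (V' R) R) ∧
    (1 ≤ a → 0 < c1 → c2 < 0 →
      ∀ R0 ∈ Set.Ioo (0:ℝ) 1, V' R0 < 0 → ∀ R ∈ Set.Ioo R0 1, V' R < 0) ∧
    (a ≤ 1 → c1 < 0 → 0 < c2 →
      ∀ R0 ∈ Set.Ioo (0:ℝ) 1, V' R0 < 0 → ∀ R ∈ Set.Ioo R0 1, V' R < 0) ∧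
    (0 ≤ c1 → 0 ≤ c2 → AntitoneOn V (Set.Ioo (0:ℝ) 1)) ∧
    (c1 ≤ 0 → c2 ≤ 0 → MonotoneOn V (Set.Ioo (0:ℝ) 1)) :=
  stmt_15_general a Q σ ha hQ
end

section
/- Consider the limits lim_{R→0} V'(R) and lim_{R→1} V'(R) for V(R) as in the asymmetric model with a < 1. Then lim_{R→0} V'(R) > 0 if and only if (a+1)(Q + (1-2Q)σ/(1+σ)) > a, and lim_{R→1} V'(R) < 0 if and only if (a+1)(Q + (1-2Q)σ/(1+σ)) < 1. Consequently, if 1/(a+1) > Q + (1-2Q)σ/(1+σ) > a/(a+1), then V attains an interior maximum on (0,1). -/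
/-!
Writing `k = aQ/(a+1)` and `s = Q + h`, the derivative is
`V'(R) = k((a+1)s - a) R^(a-1) + k((a+1)s - 1) (1-R)^(a-1)`. Since `a - 1 < 0`, the first
term blows up at `R = 0` while the second stays bounded, and the other way round at `R = 1`;
so the sign of each coefficient decides the corresponding boundary limit. When `V'` is
positive near `0` and negative near `1`, the maximum of the continuous function `V` on
`[0, 1]` cannot sit at an endpoint.
-/

open Filter Set Topology

section Asymptotics

variable {α : Type*} {l : Filter α} [l.NeBot] {u v : α → ℝ} {c : ℝ}

theorem tendsto_const_mul_add_atTop_iff (hu : Tendsto u l atTop) (hv : Tendsto v l (𝓝 c))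
    (k : ℝ) : Tendsto (fun x => k * u x + v x) l atTop ↔ 0 < k := by
  refine ⟨fun h => ?_, fun hk => (hu.const_mul_atTop hk).atTop_add hv⟩
  by_contra! hk
  have hbdd : ∀ᶠ x in l, k * u x + v x < c + 1 := by
    filter_upwards [hu.eventually_ge_atTop 0, hv.eventually (eventually_lt_nhds (lt_add_one c))]
      with x hux hvx
    linarith [mul_nonpos_of_nonpos_of_nonneg hk hux]
  obtain ⟨x, hx, hx'⟩ := (hbdd.and (h.eventually_ge_atTop (c + 1))).exists
  exact hx.not_ge hx'

theorem tendsto_const_mul_add_atBot_iff (hu : Tendsto u l atTop) (hv : Tendsto v l (𝓝 c))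
    (k : ℝ) : Tendsto (fun x => k * u x + v x) l atBot ↔ k < 0 := by
  have := tendsto_const_mul_add_atTop_iff hu hv.neg (-k)
  simp only [neg_mul, ← neg_add, neg_pos] at this
  rwa [← tendsto_neg_atTop_iff]

end Asymptotics

section TwoPoles

variable {p : ℝ}

theorem tendsto_one_sub_rpow_nhdsLT_one (hp : p < 0) :
    Tendsto (fun x : ℝ => (1 - x) ^ p) (𝓝[<] 1) atTop := by
  have hmap : Tendsto (fun x : ℝ => 1 - x) (𝓝[<] 1) (𝓝[>] 0) := by
    have := (map_subLeft_nhdsLT (c := (1 : ℝ)) (a := 1)).le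
    rwa [sub_self] at this
  exact (tendsto_rpow_neg_nhdsGT_zero hp).comp hmap

theorem tendsto_const_mul_rpow_nhds_one (A : ℝ) :
    Tendsto (fun x : ℝ => A * x ^ p) (𝓝 1) (𝓝 A) := by
  have hcont : ContinuousAt (fun x : ℝ => A * x ^ p) 1 :=
    continuousAt_const.mul (Real.continuousAt_rpow_const 1 p (Or.inl one_ne_zero))
  simpa only [Real.one_rpow, mul_one] using hcont.tendsto

theorem tendsto_rpow_add_one_sub_rpow_nhdsGT_zero_atTop_iff (hp : p < 0) (A B : ℝ) :
    Tendsto (fun x : ℝ => A * x ^ p + B * (1 - x) ^ p) (𝓝[>] 0) atTop ↔ 0 < A := by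
  have hB : Tendsto (fun x : ℝ => B * (1 - x) ^ p) (𝓝[>] 0) (𝓝 B) := by
    have hsub : Tendsto (fun x : ℝ => 1 - x) (𝓝[>] 0) (𝓝 1) :=
      ((continuous_const.sub continuous_id).tendsto' 0 1 (sub_zero 1)).mono_left
        nhdsWithin_le_nhds
    exact (tendsto_const_mul_rpow_nhds_one B).comp hsub
  exact tendsto_const_mul_add_atTop_iff (tendsto_rpow_neg_nhdsGT_zero hp) hB A

theorem tendsto_rpow_add_one_sub_rpow_nhdsLT_one_atBot_iff (hp : p < 0) (A B : ℝ) :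
    Tendsto (fun x : ℝ => A * x ^ p + B * (1 - x) ^ p) (𝓝[<] 1) atBot ↔ B < 0 := by
  have := tendsto_const_mul_add_atBot_iff (tendsto_one_sub_rpow_nhdsLT_one hp)
    ((tendsto_const_mul_rpow_nhds_one (p := p) A).mono_left nhdsWithin_le_nhds) B
  simpa only [add_comm] using this

end TwoPoles

section InteriorMax

variable {f f' : ℝ → ℝ} {a b : ℝ}

theorem exists_mem_Ioc_lt_of_eventually_deriv_pos (hab : a < b) (hf : ContinuousOn f (Icc a b))
    (hderiv : ∀ x ∈ Ioo a b, HasDerivAt f (f' x) x) (hpos : ∀ᶠ x in 𝓝[>] a, 0 < f' x) :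
    ∃ x ∈ Ioc a b, f a < f x := by
  obtain ⟨u, hau, hu⟩ := mem_nhdsGT_iff_exists_Ioo_subset.1 hpos
  set x := min u b
  have hax : a < x := lt_min hau hab
  have hxb : x ≤ b := min_le_right u b
  have hmono : StrictMonoOn f (Icc a x) := by
    refine strictMonoOn_of_deriv_pos (convex_Icc a x) (hf.mono (Icc_subset_Icc_right hxb)) ?_
    intro y hy
    rw [interior_Icc] at hy
    rw [(hderiv y ⟨hy.1, hy.2.trans_le hxb⟩).deriv]
    exact hu ⟨hy.1, hy.2.trans_le (min_le_left u b)⟩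
  exact ⟨x, ⟨hax, hxb⟩, hmono (left_mem_Icc.2 hax.le) (right_mem_Icc.2 hax.le) hax⟩

theorem exists_mem_Ico_lt_of_eventually_deriv_neg (hab : a < b) (hf : ContinuousOn f (Icc a b))
    (hderiv : ∀ x ∈ Ioo a b, HasDerivAt f (f' x) x) (hneg : ∀ᶠ x in 𝓝[<] b, f' x < 0) :
    ∃ x ∈ Ico a b, f b < f x := by
  obtain ⟨l, hlb, hl⟩ := mem_nhdsLT_iff_exists_Ioo_subset.1 hneg
  set x := max l a
  have hxb : x < b := max_lt hlb hab
  have hax : a ≤ x := le_max_right l a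
  have hanti : StrictAntiOn f (Icc x b) := by
    refine strictAntiOn_of_deriv_neg (convex_Icc x b) (hf.mono (Icc_subset_Icc_left hax)) ?_
    intro y hy
    rw [interior_Icc] at hy
    rw [(hderiv y ⟨hax.trans_lt hy.1, hy.2⟩).deriv]
    exact hl ⟨(le_max_left l a).trans_lt hy.1, hy.2⟩
  exact ⟨x, ⟨hax, hxb⟩, hanti (left_mem_Icc.2 hxb.le) (right_mem_Icc.2 hxb.le) hxb⟩

theorem exists_mem_Ioo_isMaxOn_of_eventually_deriv (hab : a < b) (hf : ContinuousOn f (Icc a b))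
    (hderiv : ∀ x ∈ Ioo a b, HasDerivAt f (f' x) x) (hpos : ∀ᶠ x in 𝓝[>] a, 0 < f' x)
    (hneg : ∀ᶠ x in 𝓝[<] b, f' x < 0) : ∃ c ∈ Ioo a b, IsMaxOn f (Icc a b) c := by
  obtain ⟨c, hc, hmax⟩ := isCompact_Icc.exists_isMaxOn (nonempty_Icc.2 hab.le) hf
  obtain ⟨x, hx, hax⟩ := exists_mem_Ioc_lt_of_eventually_deriv_pos hab hf hderiv hpos
  obtain ⟨y, hy, hby⟩ := exists_mem_Ico_lt_of_eventually_deriv_neg hab hf hderiv hneg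
  refine ⟨c, ⟨hc.1.lt_of_ne ?_, hc.2.lt_of_ne ?_⟩, hmax⟩
  · rintro rfl
    exact (isMaxOn_iff.1 hmax x (Ioc_subset_Icc_self hx)).not_gt hax
  · rintro rfl
    exact (isMaxOn_iff.1 hmax y (Ico_subset_Icc_self hy)).not_gt hby

end InteriorMax

section AsymmetricModel

/-- The function `V` of the asymmetric model, with `h` in place of `(1 - 2Q)σ/(1 + σ)`. -/
noncomputable def asymValue (a Q h R : ℝ) : ℝ :=
  h + (a*Q*(1 - R ^ a) + Q*(1 - R) ^ a) / (a + 1) - (h + Q*(1 - R ^ a) + Q*(1 - R) ^ a) * (h + Q)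

variable {a Q h : ℝ}

theorem continuous_asymValue (ha : 0 ≤ a) : Continuous (asymValue a Q h) := by
  have hpow : Continuous fun R : ℝ => R ^ a := Real.continuous_rpow_const ha
  have hpow' : Continuous fun R : ℝ => (1 - R) ^ a := hpow.comp (continuous_const.sub continuous_id)
  unfold asymValue
  fun_prop

theorem hasDerivAt_asymValue (ha : a + 1 ≠ 0) {R : ℝ} (hR : R ∈ Ioo 0 1) :
    HasDerivAt (asymValue a Q h)
      (a * Q / (a + 1) * ((a + 1) * (Q + h) - a) * R ^ (a - 1)
        + a * Q / (a + 1) * ((a + 1) * (Q + h) - 1) * (1 - R) ^ (a - 1)) R := by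
  have hR₀ : R ≠ 0 := hR.1.ne'
  have hR₁ : 1 - R ≠ 0 := (sub_pos.2 hR.2).ne'
  have hpow : HasDerivAt (fun x : ℝ => 1 - x ^ a) (-(a * R ^ (a - 1))) R :=
    (Real.hasDerivAt_rpow_const (Or.inl hR₀)).const_sub 1
  have hpow' : HasDerivAt (fun x : ℝ => (1 - x) ^ a) (a * (1 - R) ^ (a - 1) * -1) R :=
    (Real.hasDerivAt_rpow_const (Or.inl hR₁)).comp R ((hasDerivAt_id R).const_sub 1)
  have hV : HasDerivAt (asymValue a Q h) _ R :=
    ((((hpow.const_mul (a * Q)).add (hpow'.const_mul Q)).div_const (a + 1)).const_add h).sub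
      ((((hpow.const_mul Q).const_add h).add (hpow'.const_mul Q)).mul_const (h + Q))
  convert hV using 1
  field_simp
  ring

end AsymmetricModel

theorem stmt_16_general (a Q σ : ℝ)
    (ha : a ∈ Set.Ioo (0:ℝ) 1) (hQ : Q ∈ Set.Ioo (0:ℝ) (1/2)) :
    let h := (1 - 2*Q) * σ / (1 + σ)
    let V := fun R : ℝ => h + (a*Q*(1 - R ^ a) + Q*(1 - R) ^ a) / (a + 1)
      - (h + Q*(1 - R ^ a) + Q*(1 - R) ^ a) * (h + Q)
    let V' := fun R : ℝ =>
      (a * Q * ((a + 1) * (R ^ (a - 1) + (1 - R) ^ (a - 1)) * (Q + h)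
        - a * R ^ (a - 1) - (1 - R) ^ (a - 1))) / (a + 1)
    (∀ R ∈ Set.Ioo (0:ℝ) 1, HasDerivAt V (V' R) R) ∧
    (Filter.Tendsto V' (nhdsWithin 0 (Set.Ioo (0:ℝ) 1)) Filter.atTop ↔
      a < (a + 1) * (Q + h)) ∧
    (Filter.Tendsto V' (nhdsWithin 1 (Set.Ioo (0:ℝ) 1)) Filter.atBot ↔
      (a + 1) * (Q + h) < 1) ∧
    (a / (a + 1) < Q + h ∧ Q + h < 1 / (a + 1) →
      ∃ Rs ∈ Set.Ioo (0:ℝ) 1, ∀ R ∈ Set.Ioo (0:ℝ) 1, V R ≤ V Rs) := by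
  intro h V V'
  obtain ⟨ha₀, ha₁⟩ := ha
  have ha₁' : 0 < a + 1 := by linarith
  have hk : 0 < a * Q / (a + 1) := by have := hQ.1; positivity
  have hp : a - 1 < 0 := by linarith
  have hV' : V' = fun R => a * Q / (a + 1) * ((a + 1) * (Q + h) - a) * R ^ (a - 1)
      + a * Q / (a + 1) * ((a + 1) * (Q + h) - 1) * (1 - R) ^ (a - 1) := by
    funext R
    simp only [V']
    field_simp
    ring
  have hderiv : ∀ R ∈ Ioo (0:ℝ) 1, HasDerivAt V (V' R) R := fun R hR => by
    rw [hV']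
    exact hasDerivAt_asymValue ha₁'.ne' hR
  have hlim₀ : Tendsto V' (𝓝[>] 0) atTop ↔ a < (a + 1) * (Q + h) := by
    rw [hV', tendsto_rpow_add_one_sub_rpow_nhdsGT_zero_atTop_iff hp, mul_pos_iff_of_pos_left hk,
      sub_pos]
  have hlim₁ : Tendsto V' (𝓝[<] 1) atBot ↔ (a + 1) * (Q + h) < 1 := by
    rw [hV', tendsto_rpow_add_one_sub_rpow_nhdsLT_one_atBot_iff hp, ← sub_neg (a := (a + 1) * (Q + h))]
    exact ⟨fun hneg => neg_of_mul_neg_right hneg hk.le, mul_neg_of_pos_of_neg hk⟩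
  rw [nhdsWithin_Ioo_eq_nhdsGT one_pos, nhdsWithin_Ioo_eq_nhdsLT one_pos]
  refine ⟨hderiv, hlim₀, hlim₁, fun ⟨hlo, hhi⟩ => ?_⟩
  have hpos := (hlim₀.2 ((div_lt_iff₀' ha₁').1 hlo)).eventually_gt_atTop 0
  have hneg := (hlim₁.2 ((lt_div_iff₀' ha₁').1 hhi)).eventually_lt_atBot 0
  obtain ⟨Rs, hRs, hmax⟩ := exists_mem_Ioo_isMaxOn_of_eventually_deriv zero_lt_one
    (continuous_asymValue ha₀.le).continuousOn hderiv hpos hneg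
  exact ⟨Rs, hRs, fun R hR => isMaxOn_iff.1 hmax R (Ioo_subset_Icc_self hR)⟩

/-- Boundary behavior of V'(R) in the asymmetric model with a < 1, and the
resulting interior maximum. -/
theorem stmt_16 (a Q σ : ℝ)
    (ha : a ∈ Set.Ioo (0:ℝ) 1) (hQ : Q ∈ Set.Ioo (0:ℝ) (1/2)) (hσ : 0 < σ) :
    let h := (1 - 2*Q) * σ / (1 + σ)
    let V := fun R : ℝ => h + (a*Q*(1 - R ^ a) + Q*(1 - R) ^ a) / (a + 1)
      - (h + Q*(1 - R ^ a) + Q*(1 - R) ^ a) * (h + Q)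
    let V' := fun R : ℝ =>
      (a * Q * ((a + 1) * (R ^ (a - 1) + (1 - R) ^ (a - 1)) * (Q + h)
        - a * R ^ (a - 1) - (1 - R) ^ (a - 1))) / (a + 1)
    (∀ R ∈ Set.Ioo (0:ℝ) 1, HasDerivAt V (V' R) R) ∧
    (Filter.Tendsto V' (nhdsWithin 0 (Set.Ioo (0:ℝ) 1)) Filter.atTop ↔
      a < (a + 1) * (Q + h)) ∧
    (Filter.Tendsto V' (nhdsWithin 1 (Set.Ioo (0:ℝ) 1)) Filter.atBot ↔
      (a + 1) * (Q + h) < 1) ∧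
    (a / (a + 1) < Q + h ∧ Q + h < 1 / (a + 1) →
      ∃ Rs ∈ Set.Ioo (0:ℝ) 1, ∀ R ∈ Set.Ioo (0:ℝ) 1, V R ≤ V Rs) :=
  stmt_16_general a Q σ ha hQ
end

section
/- In the infinite-learning model with mixed recommendations, the type ĩ_∞ indifferent between buying the (necessarily controversial) product and the outside option satisfies: if λ ≠ 1, ĩ_∞ = ((σ-1)/(2(1+σ)))·((λ+1)/(λ-1)), where λ = q_1/q_2 and σ = q_H/q_L. In particular, if λ > 1 and σ ≥ λ then ĩ_∞ ≥ 1/2 (no type buys), and if λ > 1 and σ ≤ 1/λ then ĩ_∞ ≤ -1/2 (every type buys). -/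
/-!
Write `s = q₁ + q₂` and `r = (q₁ - q₂)/(q₁ + q₂)`. Since `q₁(1/2 + i) + q₂(1/2 - i) = s/2 + i r s`
and `q_H = (1 - s) σ/(σ + 1)`, the indifference equation reduces to
`(1 - s) (i r - (σ - 1)/(2(σ + 1))) = 0`, so it holds as soon as `i r = (σ - 1)/(2(σ + 1))`.
The parameterization gives `r = (λ - 1)/(λ + 1)`, whence the formula for `ĩ_∞`; comparing it
with `±1/2` then reduces to `λ ≤ σ` and `σ λ ≤ 1`.
-/

/-- The indifferent type `ĩ_∞` as a function of `σ = q_H/q_L` and `λ = q₁/q₂`. -/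
noncomputable def indifferentType (σ lam : ℝ) : ℝ :=
  (σ - 1) / (2 * (1 + σ)) * ((lam + 1) / (lam - 1))

theorem indifference_of_mul_ratio_eq {q₁ q₂ σ i : ℝ} (hs : q₁ + q₂ ≠ 0) (hσ : σ + 1 ≠ 0)
    (hi : i * ((q₁ - q₂) / (q₁ + q₂)) = (σ - 1) / (2 * (σ + 1))) :
    1/2 + i * (q₁ - q₂) / (q₁ + q₂)
      = (1 - (q₁ + q₂)) * σ / (σ + 1) + q₁ * (1/2 + i) + q₂ * (1/2 - i) := by
  have hr : 2 * (σ + 1) * (i * (q₁ - q₂)) = (σ - 1) * (q₁ + q₂) := by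
    field_simp at hi; linear_combination hi
  rw [mul_div_assoc, hi]
  field_simp
  linear_combination -hr

theorem mixed_share_ratio {Q lam : ℝ} (hQ : Q ≠ 0) (hlam : lam + 1 ≠ 0) :
    (2 * Q * lam / (lam + 1) - 2 * Q / (lam + 1)) / (2 * Q * lam / (lam + 1) + 2 * Q / (lam + 1))
      = (lam - 1) / (lam + 1) := by
  field_simp

theorem indifferentType_mul_ratio (σ : ℝ) {lam : ℝ} (h₁ : lam - 1 ≠ 0) (h₂ : lam + 1 ≠ 0) :
    indifferentType σ lam * ((lam - 1) / (lam + 1)) = (σ - 1) / (2 * (σ + 1)) := by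
  unfold indifferentType
  field_simp
  ring

theorem half_le_indifferentType_iff {σ lam : ℝ} (hσ : 0 < 1 + σ) (hlam : 1 < lam) :
    1/2 ≤ indifferentType σ lam ↔ lam ≤ σ := by
  have : 0 < lam - 1 := by linarith
  unfold indifferentType
  rw [div_mul_div_comm, le_div_iff₀ (by positivity)]
  constructor <;> intro h <;> nlinarith

theorem indifferentType_le_neg_half_iff {σ lam : ℝ} (hσ : 0 < 1 + σ) (hlam : 1 < lam) :
    indifferentType σ lam ≤ -(1/2) ↔ σ * lam ≤ 1 := by
  have : 0 < lam - 1 := by linarith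
  unfold indifferentType
  rw [div_mul_div_comm, div_le_iff₀ (by positivity)]
  constructor <;> intro h <;> nlinarith

/-- The indifferent type under infinite learning with mixed recommendations. -/
theorem stmt_18 (Q lam σ : ℝ)
    (hQ : Q ∈ Set.Ioo (0:ℝ) (1/2)) (hlam : 0 < lam) (hσ : 0 < σ) (hne : lam ≠ 1) :
    let q1 := 2*Q*lam / (lam + 1)
    let q2 := 2*Q / (lam + 1)
    let qH := (1 - 2*Q) * σ / (σ + 1)
    let itil := (σ - 1) / (2*(1 + σ)) * ((lam + 1) / (lam - 1))
    (1/2 + itil * (q1 - q2) / (q1 + q2)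
      = qH + q1 * (1/2 + itil) + q2 * (1/2 - itil)) ∧
    (1 < lam → lam ≤ σ → 1/2 ≤ itil) ∧
    (1 < lam → σ ≤ 1/lam → itil ≤ -(1/2)) := by
  intro q1 q2 qH itil
  have hQ : Q ≠ 0 := hQ.1.ne'
  have hlam₁ : lam + 1 ≠ 0 := by positivity
  have hsum : q1 + q2 = 2 * Q := by simp only [q1, q2]; field_simp
  have hqH : qH = (1 - (q1 + q2)) * σ / (σ + 1) := by rw [hsum]
  refine ⟨?_, fun h₁ h₂ => (half_le_indifferentType_iff (by linarith) h₁).2 h₂,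
    fun h₁ h₂ => (indifferentType_le_neg_half_iff (by linarith) h₁).2 ((le_div_iff₀ hlam).1 h₂)⟩
  rw [hqH]
  refine indifference_of_mul_ratio_eq (by rw [hsum]; positivity) (by positivity) ?_
  rw [mixed_share_ratio hQ hlam₁]
  exact indifferentType_mul_ratio σ (sub_ne_zero.2 hne) hlam₁
end
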